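/- For every c ≥ 8800 and every (u,v) ∈ ℛ, the piecewise vector field ξ = (ξ₁,ξ₂) satisfies ξ₁(u,v) ≤ η₁(u,v) and ξ₂(u,v) ≤ η₂(u,v), where η₁(u,v) = (2c(1−u)+1)v − u and η₂(u,v) = (c(u−v)−2)v. -/
import Mathlib


open Set Pointwise

/-- `ℛ = {(u,v) ∈ ℝ² : 0 ≤ v ≤ u ≤ 1}`. -/
def calR : Set (ℝ × ℝ) := {p | 0 ≤ p.2 ∧ p.2 ≤ p.1 ∧ p.1 ≤ 1}

/-- `F` is the flow on `ℛ` generated by the vector field `η`: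
`F⁰ = id`, `F^s` maps `ℛ` into `ℛ` for `s ≥ 0`, and `s ↦ F^s(p)` is
differentiable with derivative `η(F^s(p))`. -/
structure IsFlowOf (η : ℝ × ℝ → ℝ × ℝ) (F : ℝ → ℝ × ℝ → ℝ × ℝ) : Prop where
  init : ∀ p ∈ calR, F 0 p = p
  mem : ∀ s, 0 ≤ s → ∀ p ∈ calR, F s p ∈ calR
  deriv : ∀ p ∈ calR, ∀ s, 0 ≤ s →
    HasDerivWithinAt (fun τ => F τ p) (η (F s p)) (Set.Ici 0) s

/-- The flow is monotone: it preserves the componentwise partial order on `ℛ`. -/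
def MonotoneFlow (F : ℝ → ℝ × ℝ → ℝ × ℝ) : Prop :=
  ∀ s, 0 ≤ s → ∀ p ∈ calR, ∀ q ∈ calR, p ≤ q → F s p ≤ F s q

/-- `γ` is a nonincreasing curve in `ℛ`: its `v`-coordinate is nonincreasing
as a function of its `u`-coordinate. -/
def NonincreasingCurve (γ : Set (ℝ × ℝ)) : Prop :=
  γ ⊆ calR ∧ ∀ p ∈ γ, ∀ q ∈ γ, p.1 ≤ q.1 → q.2 ≤ p.2

/-- `γ_θ = (1+θ)γ ∩ ℛ`. -/
def gTheta (γ : Set (ℝ × ℝ)) (θ : ℝ) : Set (ℝ × ℝ) := ((1 + θ) • γ) ∩ calR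

/-- Assumption 4.1 for the flow `F`, with data `γ, θ₀, (φ_θ), ε, K₁, K₂, s₀`:
the maps `φ_θ : [0,s₀] × γ_θ → γ_θ` are continuous, and for all `θ ∈ [0,θ₀]`,
`(a₀,b₀) ∈ γ_θ`, `α ∈ (0,1]` and `s ∈ [0,s₀]`, writing `(a_s,b_s) = φ_θ(s,(a₀,b₀))`:
`F^s(αa₀,αb₀) ≥ (1+K₁s)α(a_s,b_s)` if `αb₀ ≥ ε`, and
`F^s(αa₀,αb₀) ≥ (1−K₂s)α(a_s,b_s)` if `αb₀ < ε`. -/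
def Assumption41 (F : ℝ → ℝ × ℝ → ℝ × ℝ) (γ : Set (ℝ × ℝ)) (θ₀ : ℝ)
    (φ : ℝ → ℝ → ℝ × ℝ → ℝ × ℝ) (ε K₁ K₂ s₀ : ℝ) : Prop :=
  0 < ε ∧ 0 < K₁ ∧ 0 < K₂ ∧ 0 < s₀ ∧
  (∀ θ ∈ Set.Icc (0 : ℝ) θ₀,
    (∀ s ∈ Set.Icc (0 : ℝ) s₀, ∀ p ∈ gTheta γ θ, φ θ s p ∈ gTheta γ θ) ∧
    ContinuousOn (fun q : ℝ × (ℝ × ℝ) => φ θ q.1 q.2)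
      (Set.Icc (0 : ℝ) s₀ ×ˢ gTheta γ θ)) ∧
  ∀ θ ∈ Set.Icc (0 : ℝ) θ₀, ∀ p ∈ gTheta γ θ, ∀ α ∈ Set.Ioc (0 : ℝ) 1,
    ∀ s ∈ Set.Icc (0 : ℝ) s₀,
      (ε ≤ α * p.2 → ((1 + K₁ * s) * α) • φ θ s p ≤ F s (α • p)) ∧
      (α * p.2 < ε → ((1 - K₂ * s) * α) • φ θ s p ≤ F s (α • p))

/-- The vector field `η(u,v) = ((2c(1−u)+1)v − u, (c(u−v)−2)v)`. -/
def etaVF (c : ℝ) (p : ℝ × ℝ) : ℝ × ℝ :=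
  ((2 * c * (1 - p.1) + 1) * p.2 - p.1, (c * (p.1 - p.2) - 2) * p.2)

/-- `ℛ₁ = {(u,v) : ε'u < v ≤ ε', u ≤ 0.9}` with `ε' = 0.23`. -/
def regR1 : Set (ℝ × ℝ) := {p | 0.23 * p.1 < p.2 ∧ p.2 ≤ 0.23 ∧ p.1 ≤ 0.9}

/-- `ℛ₂ = {(u,v) : ε' < v ≤ 0.6, u < 1.1 v}`. -/
def regR2 : Set (ℝ × ℝ) := {p | 0.23 < p.2 ∧ p.2 ≤ 0.6 ∧ p.1 < 1.1 * p.2}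

/-- The segment `L₁ = B'B''`, with `B' = (0.253, 0.23)`, `B'' = (0.66, 0.6)`. -/
def segL1 : Set (ℝ × ℝ) := segment ℝ ((0.253 : ℝ), (0.23 : ℝ)) ((0.66 : ℝ), (0.6 : ℝ))

/-- `ℛ₃` = (interior of the trapezoid `B'C'C''B''`) ∪ segment `C'C''`,
with `B' = (0.253,0.23)`, `C' = (0.9,0.23)`, `C'' = (0.9,0.6)`, `B'' = (0.66,0.6)`. -/
def regR3 : Set (ℝ × ℝ) :=
  interior (convexHull ℝ
      ({((0.253 : ℝ), (0.23 : ℝ)), ((0.9 : ℝ), (0.23 : ℝ)),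
        ((0.9 : ℝ), (0.6 : ℝ)), ((0.66 : ℝ), (0.6 : ℝ))} : Set (ℝ × ℝ))) ∪
    segment ℝ ((0.9 : ℝ), (0.23 : ℝ)) ((0.9 : ℝ), (0.6 : ℝ))

/-- `ℛ₄` = interior of the rectangle `C'D'D''C''` = `(0.9,1) × (0.23,0.6)`. -/
def regR4 : Set (ℝ × ℝ) := Ioo (0.9 : ℝ) 1 ×ˢ Ioo (0.23 : ℝ) 0.6

open Classical in
/-- The piecewise vector field `ξ` (with `F₁ = 400`, `F₂ = 75`):
`(F₁u, −2v)` on `ℛ₁ ∪ ℛ₂`, `(1.1F₂v, F₂v)` on `L₁`, `(0, F₂v)` on `ℛ₃`,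
`(−u, F₂v)` on `ℛ₄`, and `η` elsewhere in `ℛ`. -/
noncomputable def xiVF (c : ℝ) (p : ℝ × ℝ) : ℝ × ℝ :=
  if p ∈ regR1 ∪ regR2 then (400 * p.1, -2 * p.2)
  else if p ∈ segL1 then (1.1 * 75 * p.2, 75 * p.2)
  else if p ∈ regR3 then (0, 75 * p.2)
  else if p ∈ regR4 then (-p.1, 75 * p.2)
  else etaVF c p

/-- The curve `γ = AB ∪ BD` with `A = (0.51,0.51)`, `B = (0.55,0.5)`, `D = (1,0.5)`. -/
def gammaCurve : Set (ℝ × ℝ) :=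
  segment ℝ ((0.51 : ℝ), (0.51 : ℝ)) ((0.55 : ℝ), (0.5 : ℝ)) ∪
    segment ℝ ((0.55 : ℝ), (0.5 : ℝ)) ((1 : ℝ), (0.5 : ℝ))

/-- `s₀ = min(log(12/11)/F₂, log(45/23)/(F₁+2))`. -/
noncomputable def sZero : ℝ :=
  min (Real.log (12 / 11) / 75) (Real.log (45 / 23) / 402)

/-- The closed triangle `Δ = ΔA'B'E'` with vertices `A' = (0.2346, 0.2346)`,
`B' = (0.253, 0.23)` and `E' = (0.23, 0.23)`. -/
def triangleD : Set (ℝ × ℝ) :=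
  convexHull ℝ ({((0.2346 : ℝ), (0.2346 : ℝ)), ((0.253 : ℝ), (0.23 : ℝ)),
    ((0.23 : ℝ), (0.23 : ℝ))} : Set (ℝ × ℝ))

lemma regR3_sub : regR3 ⊆ {p : ℝ × ℝ | 0.23 ≤ p.2 ∧ p.2 ≤ 0.6 ∧ p.1 ≤ 0.9 ∧ 0.023 ≤ p.1 - p.2} := by
  set t : Set (ℝ × ℝ) := {p : ℝ × ℝ | 0.23 ≤ p.2 ∧ p.2 ≤ 0.6 ∧ p.1 ≤ 0.9 ∧ 0.023 ≤ p.1 - p.2} with ht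
  have hconv : Convex ℝ t := by
    rintro x ⟨hx1, hx2, hx3, hx4⟩ y ⟨hy1, hy2, hy3, hy4⟩ a b ha hb hab
    refine ⟨?_, ?_, ?_, ?_⟩ <;>
      simp only [Prod.smul_fst, Prod.smul_snd, Prod.fst_add, Prod.snd_add, smul_eq_mul] <;>
      nlinarith
  have hhull : convexHull ℝ ({((0.253 : ℝ), (0.23 : ℝ)), ((0.9 : ℝ), (0.23 : ℝ)),
      ((0.9 : ℝ), (0.6 : ℝ)), ((0.66 : ℝ), (0.6 : ℝ))} : Set (ℝ × ℝ)) ⊆ t := by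
    apply convexHull_min _ hconv
    rintro q hq
    simp only [Set.mem_insert_iff, Set.mem_singleton_iff] at hq
    rcases hq with rfl | rfl | rfl | rfl <;> exact ⟨by norm_num, by norm_num, by norm_num, by norm_num⟩
  rintro p (hp | hp)
  · exact hhull (interior_subset hp)
  · exact hhull (segment_subset_convexHull (by simp) (by simp) hp)

set_option maxHeartbeats 1000000 in
/-- For every `c ≥ 8800` and every `(u,v) ∈ ℛ`, the piecewise vector field `ξ`
satisfies `ξ₁(u,v) ≤ η₁(u,v)` and `ξ₂(u,v) ≤ η₂(u,v)`. -/
theorem stmt11 (c : ℝ) (hc : 8800 ≤ c) (p : ℝ × ℝ) (hp : p ∈ calR) :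
    (xiVF c p).1 ≤ (etaVF c p).1 ∧ (xiVF c p).2 ≤ (etaVF c p).2 := by
  obtain ⟨hv0, hvu, hu1⟩ := hp
  unfold xiVF
  split_ifs with h1 h2 h3 h4
  · -- R1 ∪ R2
    have hcv : 0 ≤ c * (p.1 - p.2) * p.2 :=
      mul_nonneg (mul_nonneg (by linarith) (by linarith)) hv0
    refine ⟨?_, by simp only [etaVF]; nlinarith⟩
    simp only [etaVF]
    rcases h1 with h | h
    · obtain ⟨ha, hb, hc'⟩ := h
      have h1u : (0.1 : ℝ) ≤ 1 - p.1 := by linarith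
      have key : (1760 : ℝ) ≤ 2 * c * (1 - p.1) := by nlinarith
      nlinarith [mul_le_mul_of_nonneg_right key hv0]
    · obtain ⟨ha, hb, hc'⟩ := h
      have h1u : (0.34 : ℝ) ≤ 1 - p.1 := by linarith
      have key : (5984 : ℝ) ≤ 2 * c * (1 - p.1) := by nlinarith
      nlinarith [mul_le_mul_of_nonneg_right key hv0]
  · -- L1
    obtain ⟨a, b, ha, hb, hab, rfl⟩ := h2
    simp only [etaVF, Prod.smul_fst, Prod.smul_snd, Prod.fst_add, Prod.snd_add, smul_eq_mul]
    constructor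
    · have h1u : (0.34 : ℝ) ≤ 1 - (a * 0.253 + b * 0.66) := by nlinarith
      have hv : (0.23 : ℝ) ≤ a * 0.23 + b * 0.6 := by nlinarith
      have hv6 : a * 0.23 + b * 0.6 ≤ (0.6 : ℝ) := by nlinarith
      have key : (5984 : ℝ) ≤ 2 * c * (1 - (a * 0.253 + b * 0.66)) := by nlinarith
      nlinarith [mul_le_mul key hv (by norm_num) (by nlinarith)]
    · have hd : (0.023 : ℝ) ≤ (a * 0.253 + b * 0.66) - (a * 0.23 + b * 0.6) := by nlinarith
      have hv : (0.23 : ℝ) ≤ a * 0.23 + b * 0.6 := by nlinarith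
      have key : (202.4 : ℝ) ≤ c * ((a * 0.253 + b * 0.66) - (a * 0.23 + b * 0.6)) := by nlinarith
      nlinarith [mul_le_mul key hv (by norm_num) (by nlinarith)]
  · -- R3
    obtain ⟨hv1, hv2, hu9, hd⟩ := regR3_sub h3
    simp only [etaVF]
    constructor
    · have h1u : (0.1 : ℝ) ≤ 1 - p.1 := by linarith
      have key : (1760 : ℝ) ≤ 2 * c * (1 - p.1) := by nlinarith
      have hkn : (0 : ℝ) ≤ 2 * c * (1 - p.1) := by linarith
      have h023 : (0 : ℝ) ≤ (0.23 : ℝ) := by norm_num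
      have hp1 : (1760 : ℝ) * 0.23 ≤ 2 * c * (1 - p.1) * p.2 := mul_le_mul key hv1 h023 hkn
      nlinarith
    · have key : (202.4 : ℝ) ≤ c * (p.1 - p.2) := by nlinarith
      have hkn : (0 : ℝ) ≤ c * (p.1 - p.2) := by linarith
      have h023 : (0 : ℝ) ≤ (0.23 : ℝ) := by norm_num
      have hp1 : (202.4 : ℝ) * 0.23 ≤ c * (p.1 - p.2) * p.2 := mul_le_mul key hv1 h023 hkn
      nlinarith
  · -- R4
    obtain ⟨⟨hu9, hu1'⟩, hv1, hv2⟩ := h4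
    simp only [etaVF]
    constructor
    · have h2c : (0 : ℝ) ≤ 2 * c * (1 - p.1) := by nlinarith
      nlinarith [mul_nonneg h2c hv0]
    · have hd : (0.3 : ℝ) ≤ p.1 - p.2 := by linarith
      have key : (2640 : ℝ) ≤ c * (p.1 - p.2) := by nlinarith
      have hkn : (0 : ℝ) ≤ c * (p.1 - p.2) := by linarith
      have h023 : (0 : ℝ) ≤ (0.23 : ℝ) := by norm_num
      have hp1 : (2640 : ℝ) * 0.23 ≤ c * (p.1 - p.2) * p.2 := mul_le_mul key (le_of_lt hv1) h023 hkn
      nlinarith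
  · exact ⟨le_refl _, le_refl _⟩
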